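/- arXiv:1304.5352 — 2 statements merged into one kernel-verified Lean document; each statement's English description precedes it below -/
import Mathlib

section
/- Let G be a finite group, p a prime dividing the order of G, and φ a fixed-point-free automorphism of G. Then there exists exactly one Sylow p-subgroup S of G with φ(S) = S. -/
/-!
Since `φ` is fixed-point-free and `G` is finite, `g ↦ g / φ g` is a bijection of `G`, and of
every `φ`-invariant subgroup. The action of `φ` on Sylow subgroups turns conjugation by `g` into
conjugation by `φ g`. If `φ S = g S g⁻¹`, then choosing `u` with `φ u * g = u` makes `u S u⁻¹`
invariant. If `S` and `g S g⁻¹` are both invariant, then `g⁻¹ * φ g` lies in the `φ`-invariant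
normalizer of `S`, and the bijection on the normalizer puts `g` itself there.
-/

open MonoidHom MulAction

namespace MonoidHom.FixedPointFree

variable {G : Type*} [Group G] [Finite G] {φ : G →* G}

theorem mem_of_commutatorMap_mem (hφ : FixedPointFree φ) {H : Subgroup G}
    (hH : H ≤ H.comap φ) {g : G} (hg : commutatorMap φ g ∈ H) : g ∈ H := by
  have hψ : FixedPointFree ((φ.subgroupComap H).comp (Subgroup.inclusion hH)) :=
    fun h hh => Subtype.ext (hφ h (congrArg Subtype.val hh))
  obtain ⟨h, hh⟩ := hψ.commutatorMap_surjective ⟨_, hg⟩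
  have : (h : G) = g := hφ.commutatorMap_injective (congrArg Subtype.val hh)
  exact this ▸ h.2

variable {X : Type*} [MulAction G X] [IsPretransitive G X] {Φ : X → X}

theorem exists_fixed_of_map_smul [Nonempty X] (hφ : FixedPointFree φ)
    (hΦ : ∀ (g : G) (x : X), Φ (g • x) = φ g • Φ x) : ∃ x, Φ x = x := by
  obtain ⟨x⟩ := ‹Nonempty X›
  obtain ⟨g, hg⟩ := exists_smul_eq G x (Φ x)
  obtain ⟨u, hu⟩ := hφ.commutatorMap_surjective g⁻¹
  refine ⟨u⁻¹ • x, ?_⟩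
  have : φ u⁻¹ * g = u⁻¹ := by
    rw [← inv_inv g, ← hu, commutatorMap_apply, inv_div, map_inv, div_eq_mul_inv,
      inv_mul_cancel_left]
  rw [hΦ, ← hg, smul_smul, this]

theorem fixed_unique_of_map_smul (hφ : FixedPointFree φ)
    (hΦ : ∀ (g : G) (x : X), Φ (g • x) = φ g • Φ x) {x y : X} (hx : Φ x = x) (hy : Φ y = y) :
    y = x := by
  obtain ⟨g, rfl⟩ := exists_smul_eq G x y
  have hstab : stabilizer G x ≤ (stabilizer G x).comap φ := fun h (hh : h • x = x) => by
    change φ h • x = x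
    rw [← hx, ← hΦ, hh]
  have hg : commutatorMap φ g⁻¹ ∈ stabilizer G x := by
    rw [mem_stabilizer_iff, commutatorMap_apply, map_inv, div_inv_eq_mul, mul_smul,
      ← hx, ← hΦ, hy, hx, inv_smul_smul]
  exact inv_mem_iff.mp (hφ.mem_of_commutatorMap_mem hstab hg)

end MonoidHom.FixedPointFree

open scoped Pointwise

theorem Sylow.mulAut_smul_smul {G : Type*} [Group G] {p : ℕ} (φ : MulAut G) (g : G)
    (S : Sylow p G) : φ • (g • S) = φ g • φ • S := by
  have : φ * MulAut.conj g = MulAut.conj (φ g) * φ := by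
    ext x; simp [MulAut.conj_apply]
  rw [Sylow.smul_def, Sylow.smul_def, smul_smul, smul_smul, this]

theorem existsUnique_invariant_sylow_general (G : Type*) [Group G] [Finite G]
    (p : ℕ) [Fact p.Prime]
    (φ : MulAut G) (hfpf : ∀ g : G, φ g = g → g = 1) :
    ∃! S : Sylow p G, (S : Subgroup G).map (φ : G ≃* G).toMonoidHom = S := by
  have hφ : FixedPointFree (φ : G ≃* G).toMonoidHom := hfpf
  have hΦ (g : G) (S : Sylow p G) : φ • (g • S) = (φ : G ≃* G).toMonoidHom g • φ • S :=
    Sylow.mulAut_smul_smul φ g S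
  have hmap (S : Sylow p G) : (S : Subgroup G).map (φ : G ≃* G).toMonoidHom = ↑(φ • S) := rfl
  simp only [hmap, Sylow.ext_iff.symm]
  obtain ⟨S, hS⟩ := hφ.exists_fixed_of_map_smul hΦ
  exact ⟨S, hS, fun Q hQ => hφ.fixed_unique_of_map_smul hΦ hS hQ⟩

/-- If `φ` is a fixed-point-free automorphism of a finite group `G` and `p`
is a prime dividing the order of `G`, then there is exactly one
`φ`-invariant Sylow `p`-subgroup of `G`. -/
theorem existsUnique_invariant_sylow (G : Type*) [Group G] [Finite G]
    (p : ℕ) [Fact p.Prime] (hdvd : p ∣ Nat.card G)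
    (φ : MulAut G) (hfpf : ∀ g : G, φ g = g → g = 1) :
    ∃! S : Sylow p G, (S : Subgroup G).map (φ : G ≃* G).toMonoidHom = S :=
  existsUnique_invariant_sylow_general G p φ hfpf
end

section
/- Let G be a finite group, p a prime, and φ a fixed-point-free automorphism of G. If S is the unique Sylow p-subgroup of G with φ(S) = S, then every p-subgroup P of G satisfying φ(P) = P is contained in S. -/
/-!
Because `φ` has no fixed points, `g ↦ g / φ g` is injective, hence bijective on every finite
`φ`-invariant subgroup. In a transitive `G`-set on which `φ` acts compatibly this yields a
`φ`-fixed point, and a unique one, since the stabilizer of a fixed point is `φ`-invariant. Applied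
to the Sylow `p`-subgroups: `S` exists and is unique, and every `φ`-invariant subgroup `N` has a
`φ`-invariant Sylow subgroup.

Enlarge `P` to a maximal `φ`-invariant `p`-subgroup `T`. The `φ`-invariant Sylow subgroup of
`N_G(T)` contains the normal `p`-subgroup `T`, so it equals `T` by maximality. Normalizers grow in
`p`-groups, so a `p`-subgroup that is Sylow in its normalizer is Sylow in `G`; hence `T = S`.
-/

open Subgroup MonoidHom

namespace MonoidHom.FixedPointFree

variable {F G : Type*} [Group G] [Finite G] [FunLike F G G] [MonoidHomClass F G G] {φ : F}

theorem exists_commutatorMap_eq_of_mem (hφ : FixedPointFree φ) {H : Subgroup G}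
    (hH : ∀ h ∈ H, φ h ∈ H) {g : G} (hg : g ∈ H) : ∃ h ∈ H, commutatorMap φ h = g := by
  let c : H → H := fun h => ⟨commutatorMap φ h, div_mem h.2 (hH h h.2)⟩
  have hc : Function.Injective c := fun a b hab =>
    Subtype.ext (hφ.commutatorMap_injective (congrArg Subtype.val hab))
  obtain ⟨h, hh⟩ := Finite.surjective_of_injective hc ⟨g, hg⟩
  exact ⟨h, h.2, congrArg Subtype.val hh⟩

variable {X : Type*} [MulAction G X] [MulAction.IsPretransitive G X] {f : X → X}

theorem exists_fixed_of_smul_comm (hφ : FixedPointFree φ) [Nonempty X]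
    (hf : ∀ (g : G) (x : X), f (g • x) = φ g • f x) : ∃ x, f x = x := by
  obtain ⟨x₀⟩ := ‹Nonempty X›
  obtain ⟨g, hg⟩ := MulAction.exists_smul_eq G x₀ (f x₀)
  obtain ⟨y, hy⟩ := hφ.commutatorMap_surjective g⁻¹
  refine ⟨y⁻¹ • x₀, ?_⟩
  have : φ y⁻¹ * g = y⁻¹ := by
    rw [← inv_inv g, ← hy, commutatorMap_apply, map_inv, inv_div, div_eq_mul_inv,
      inv_mul_cancel_left]
  rw [hf, ← hg, smul_smul, this]

theorem eq_of_fixed_of_smul_comm (hφ : FixedPointFree φ)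
    (hf : ∀ (g : G) (x : X), f (g • x) = φ g • f x) {x y : X} (hx : f x = x) (hy : f y = y) :
    x = y := by
  obtain ⟨g, rfl⟩ := MulAction.exists_smul_eq G x y
  have hstab : ∀ h ∈ MulAction.stabilizer G x, φ h ∈ MulAction.stabilizer G x := by
    intro h hh
    rw [MulAction.mem_stabilizer_iff] at hh ⊢
    rw [← hx, ← hf, hh]
  have hg : commutatorMap φ g⁻¹ ∈ MulAction.stabilizer G x := by
    rw [MulAction.mem_stabilizer_iff, commutatorMap_apply, div_eq_mul_inv, map_inv, inv_inv,
      mul_smul, inv_smul_eq_iff]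
    conv_rhs => rw [← hy, hf, hx]
  obtain ⟨h, hh, hhg⟩ := hφ.exists_commutatorMap_eq_of_mem hstab hg
  rw [hφ.commutatorMap_injective hhg, inv_mem_iff] at hh
  exact hh.symm

end MonoidHom.FixedPointFree

namespace MulAut

variable {G : Type*} [Group G]

theorem mul_conj (ψ : MulAut G) (g : G) : ψ * conj g = conj (ψ g) * ψ := by
  ext; simp

def restrict (ψ : MulAut G) {H : Subgroup G} (hH : H.map ψ.toMonoidHom = H) : MulAut H :=
  (ψ.subgroupMap H).trans (MulEquiv.subgroupCongr hH)

theorem subtype_comp_restrict (ψ : MulAut G) {H : Subgroup G} (hH : H.map ψ.toMonoidHom = H) :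
    H.subtype.comp (ψ.restrict hH).toMonoidHom = ψ.toMonoidHom.comp H.subtype :=
  rfl

theorem fixedPointFree_restrict {ψ : MulAut G} (hψ : FixedPointFree ψ) {H : Subgroup G}
    (hH : H.map ψ.toMonoidHom = H) : FixedPointFree (ψ.restrict hH) :=
  fun h hh => Subtype.ext (hψ h (congrArg Subtype.val hh))

end MulAut

namespace Sylow

variable {G : Type*} [Group G] {p : ℕ}

theorem mulAut_smul_smul_s5 (ψ : MulAut G) (g : G) (Q : Sylow p G) : ψ • g • Q = ψ g • ψ • Q := by
  rw [smul_def, smul_def, smul_smul, smul_smul, MulAut.mul_conj]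

theorem coe_mulAut_smul (ψ : MulAut G) (Q : Sylow p G) :
    ((ψ • Q : Sylow p G) : Subgroup G) = (Q : Subgroup G).map ψ.toMonoidHom :=
  rfl

theorem maximal_map_subtype {N : Subgroup G} (R : Sylow p N) :
    Maximal (fun Q : Subgroup G => IsPGroup p Q ∧ Q ≤ N) ((R : Subgroup N).map N.subtype) := by
  refine ⟨⟨R.isPGroup'.map _, map_subtype_le _⟩, fun Q ⟨hQ, hQN⟩ hRQ => ?_⟩
  have hRQ' : (R : Subgroup N) ≤ Q.subgroupOf N := (map_le_iff_le_comap).mp hRQ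
  rw [← R.is_maximal' (hQ.comap_of_injective _ N.subtype_injective) hRQ',
    map_comap_eq_self (hQN.trans_eq N.range_subtype.symm)]

variable [Finite G] [Fact p.Prime]

theorem existsUnique_map_eq_self {ψ : MulAut G} (hψ : FixedPointFree ψ) :
    ∃! S : Sylow p G, (S : Subgroup G).map ψ.toMonoidHom = S := by
  simp only [← coe_mulAut_smul, ← Sylow.ext_iff]
  obtain ⟨S, hS⟩ := hψ.exists_fixed_of_smul_comm (X := Sylow p G) (mulAut_smul_smul_s5 ψ)
  exact ⟨S, hS, fun T hT => hψ.eq_of_fixed_of_smul_comm (mulAut_smul_smul_s5 ψ) hT hS⟩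

end Sylow

namespace IsPGroup

variable {G : Type*} [Group G] {p : ℕ} [Fact p.Prime]

theorem lt_inf_normalizer_of_lt {T Q : Subgroup G} [Finite Q] (hQ : IsPGroup p Q) (hTQ : T < Q) :
    T < Q ⊓ normalizer (T : Set G) := by
  have := hQ.isNilpotent
  have hlt : T.subgroupOf Q < normalizer (T.subgroupOf Q : Set Q) :=
    Group.normalizerCondition_of_isNilpotent _
      (lt_top_iff_ne_top.mpr fun h => hTQ.not_ge (subgroupOf_eq_top.mp h))
  have := (map_lt_map_iff_of_injective Q.subtype_injective).mpr hlt
  rwa [← subgroupOf_normalizer_eq hTQ.le, subgroupOf_map_subtype, subgroupOf_map_subtype,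
    inf_eq_left.mpr hTQ.le, inf_comm] at this

theorem maximal_of_maximal_le_normalizer [Finite G] {T : Subgroup G}
    (hT : Maximal (fun Q : Subgroup G => IsPGroup p Q ∧ Q ≤ normalizer (T : Set G)) T) :
    Maximal (fun Q : Subgroup G => IsPGroup p Q) T := by
  refine ⟨hT.prop.1, fun Q hQ hTQ => ?_⟩
  by_contra hQT
  have hlt := hQ.lt_inf_normalizer_of_lt (lt_of_le_not_ge hTQ hQT)
  exact hlt.ne (hT.eq_of_le ⟨hQ.to_inf_left, inf_le_right⟩ hlt.le)

end IsPGroup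

namespace MulAut

variable {G : Type*} [Group G] [Finite G] {p : ℕ} [Fact p.Prime] {ψ : MulAut G}

theorem exists_sylow_map_subtype_map_eq_self (hψ : FixedPointFree ψ) {N : Subgroup G}
    (hN : N.map ψ.toMonoidHom = N) :
    ∃ R : Sylow p N,
      ((R : Subgroup N).map N.subtype).map ψ.toMonoidHom = (R : Subgroup N).map N.subtype := by
  obtain ⟨R, hR, -⟩ := Sylow.existsUnique_map_eq_self (p := p) (fixedPointFree_restrict hψ hN)
  refine ⟨R, ?_⟩
  rw [map_map, ← subtype_comp_restrict ψ hN, ← map_map, hR]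

theorem maximal_isPGroup_of_maximal_invariant (hψ : FixedPointFree ψ) {T : Subgroup G}
    (hT : Maximal (fun Q : Subgroup G => IsPGroup p Q ∧ Q.map ψ.toMonoidHom = Q) T) :
    Maximal (fun Q : Subgroup G => IsPGroup p Q) T := by
  set N := normalizer (T : Set G)
  have hTN : T ≤ N := le_normalizer
  have hN : N.map ψ.toMonoidHom = N := by
    rw [map_equiv_normalizer_eq, hT.prop.2]
  obtain ⟨R, hR⟩ := exists_sylow_map_subtype_map_eq_self (p := p) hψ hN
  have hTR : T ≤ (R : Subgroup N).map N.subtype := by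
    have : (T.subgroupOf N).Normal := normal_in_normalizer
    have hTp : IsPGroup p (T.subgroupOf N) := hT.prop.1.comap_of_injective _ N.subtype_injective
    simpa only [subgroupOf_map_subtype, inf_eq_left.mpr hTN] using
      map_mono (f := N.subtype) (hTp.le_sylow_of_normal R)
  have hRT := hT.eq_of_ge ⟨R.isPGroup'.map _, hR⟩ hTR
  refine IsPGroup.maximal_of_maximal_le_normalizer ?_
  simpa only [hRT] using Sylow.maximal_map_subtype R

end MulAut

/-- If `φ` is a fixed-point-free automorphism of a finite group `G` and `S`
is the `φ`-invariant Sylow `p`-subgroup of `G`, then every `φ`-invariant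
`p`-subgroup of `G` is contained in `S`. -/
theorem invariant_pSubgroup_le_invariant_sylow (G : Type*) [Group G] [Finite G]
    (p : ℕ) [Fact p.Prime]
    (φ : MulAut G) (hfpf : ∀ g : G, φ g = g → g = 1)
    (S : Sylow p G) (hS : (S : Subgroup G).map (φ : G ≃* G).toMonoidHom = S)
    (P : Subgroup G) (hP : IsPGroup p P)
    (hPinv : P.map (φ : G ≃* G).toMonoidHom = P) :
    P ≤ S := by
  obtain ⟨T, hPT, hT⟩ := Finite.exists_le_maximal
    (p := fun Q : Subgroup G => IsPGroup p Q ∧ Q.map φ.toMonoidHom = Q) ⟨hP, hPinv⟩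
  have hTmax := MulAut.maximal_isPGroup_of_maximal_invariant hfpf hT
  let T' : Sylow p G := ⟨T, hTmax.prop, fun hQ hTQ => hTmax.eq_of_ge hQ hTQ⟩
  have hST : S = T' := (Sylow.existsUnique_map_eq_self hfpf).unique hS hT.prop.2
  rw [hST]
  exact hPT
end
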